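/- For every positive integer n, ζ({10}^n) = (10·(2π)^{10n} / (10n+5)!) · ( 1 − (2 cos(2π/5))^{10n+5} − (2 cos(4π/5))^{10n+5} ). -/

import Mathlib

/-!
For `t = z ^ 10 > 0`, grouping the finite sets of positive integers by size gives
`∑ₙ ζ({10}ⁿ) tⁿ = ∏ₖ (1 + z¹⁰ / k¹⁰)`. With `ζ = e^{2πi/10}` one has
`1 + x¹⁰ = ∏_{j<5} (1 + (ζʲ x)²)`, so by Euler's product for `sinh` this is
`∏_{j<5} sinh (ζʲ π z) / (π z)⁵`. Expanding the five `sinh` into exponentials and reducing the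
exponents with `ζ⁴ - ζ³ + ζ² - ζ + 1 = 0`, two of the 32 terms cancel and the other 30 group into
`∑_{k<10} (-1)ᵏ (exp (2πz ζᵏ) - exp (2πz ζᵏ a) - exp (2πz ζᵏ b))`, where
`a = ζ² - ζ³ = 2 cos (2π/5)` and `b = ζ⁴ - ζ = 2 cos (4π/5)`.
Averaging the exponential series over the tenth roots of unity keeps exactly its terms of degree
`≡ 5 (mod 10)`; this gives the Taylor coefficients of the product, and the coefficients of a power
series are determined by its values for small `t > 0`.
-/

open Real Finset

noncomputable def mzv {r : ℕ} (a : Fin r → ℝ) : ℝ :=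
  ∑' f : {f : Fin r → ℕ // (∀ i, 1 ≤ f i) ∧ StrictMono f},
    ∏ i, ((f.1 i : ℝ)) ^ (-(a i))

noncomputable def mzsv {r : ℕ} (a : Fin r → ℝ) : ℝ :=
  ∑' f : {f : Fin r → ℕ // (∀ i, 1 ≤ f i) ∧ Monotone f},
    ∏ i, ((f.1 i : ℝ)) ^ (-(a i))

open Filter Topology
open scoped Complex

noncomputable def esymmTsum {ι : Type*} (x : ι → ℝ) (n : ℕ) : ℝ :=
  ∑' S : Set.powersetCard ι n, ∏ i ∈ S.1, x i

def strictMonoPNatEquiv (n : ℕ) :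
    {f : Fin n → ℕ // (∀ i, 1 ≤ f i) ∧ StrictMono f} ≃ (Fin n ↪o ℕ+) where
  toFun f := OrderEmbedding.ofStrictMono (fun i => ⟨f.1 i, f.2.1 i⟩) fun _ _ h => f.2.2 h
  invFun g := ⟨fun i => g i, fun i => (g i).pos, fun _ _ h => g.strictMono h⟩
  left_inv _ := rfl
  right_inv _ := rfl

theorem mzv_const_eq_esymmTsum (s : ℝ) (n : ℕ) :
    mzv (fun _ : Fin n => s) = esymmTsum (fun k : ℕ+ => (k : ℝ) ^ (-s)) n := by
  rw [mzv, esymmTsum, ← ((strictMonoPNatEquiv n).trans Set.powersetCard.ofFinEmbEquiv).tsum_eq]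
  refine tsum_congr fun f => ?_
  rw [Equiv.trans_apply, Set.powersetCard.ofFinEmbEquiv_apply, Set.powersetCard.val_ofFinEmb,
    prod_map]
  rfl

section GeneratingFunction

variable {ι : Type*}

theorem summable_prod_finset_of_nonneg {x : ι → ℝ} (h0 : ∀ i, 0 ≤ x i) (hx : Summable x) :
    Summable fun S : Finset ι => ∏ i ∈ S, x i := by
  classical
  refine summable_of_sum_le (c := Real.exp (∑' i, x i)) (fun S => prod_nonneg fun i _ => h0 i)
    fun T => ?_
  calc ∑ S ∈ T, ∏ i ∈ S, x i
      ≤ ∑ S ∈ (T.sup id).powerset, ∏ i ∈ S, x i :=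
        sum_le_sum_of_subset_of_nonneg (fun S hS => mem_powerset.2 (le_sup (f := id) hS))
          fun S _ _ => prod_nonneg fun i _ => h0 i
    _ = ∏ i ∈ T.sup id, (1 + x i) := (prod_one_add _).symm
    _ ≤ ∏ i ∈ T.sup id, Real.exp (x i) :=
        prod_le_prod (fun i _ => by linarith [h0 i]) fun i _ => by linarith [add_one_le_exp (x i)]
    _ = Real.exp (∑ i ∈ T.sup id, x i) := (Real.exp_sum _ _).symm
    _ ≤ Real.exp (∑' i, x i) := Real.exp_le_exp.2 (hx.sum_le_tsum _ fun i _ => h0 i)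

theorem HasProd.hasSum_esymmTsum_mul_pow {x : ι → ℝ} (h0 : ∀ i, 0 ≤ x i) (hx : Summable x)
    {t a : ℝ} (ht : 0 ≤ t) (h : HasProd (fun i => 1 + t * x i) a) :
    HasSum (fun n => esymmTsum x n * t ^ n) a := by
  have hS : Summable fun S : Finset ι => ∏ i ∈ S, t * x i :=
    summable_prod_finset_of_nonneg (fun i => mul_nonneg ht (h0 i)) (hx.mul_left t)
  obtain rfl := h.unique (hasProd_one_add_of_hasSum_prod hS.hasSum)
  refine (Set.powersetCard.prodEquiv.hasSum_iff.2 hS.hasSum).sigma fun n => ?_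
  have hcard (S : Set.powersetCard ι n) : ∏ i ∈ S.1, t * x i = t ^ n * ∏ i ∈ S.1, x i := by
    rw [prod_mul_distrib, prod_const, S.2]
  simp only [Function.comp_apply, Set.powersetCard.prodEquiv_apply, hcard, mul_comm _ (t ^ n)]
  exact ((summable_prod_finset_of_nonneg h0 hx).comp_injective
    Subtype.val_injective).hasSum.mul_left (t ^ n)

end GeneratingFunction

theorem eq_of_hasSum_mul_pow_eq {a b : ℕ → ℝ} {f : ℝ → ℝ}
    (h : ∀ᶠ t in 𝓝[>] 0,
      HasSum (fun n => a n * t ^ n) (f t) ∧ HasSum (fun n => b n * t ^ n) (f t)) :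
    a = b := by
  set p := FormalMultilinearSeries.ofScalars ℝ (a - b)
  have hp_apply (t : ℝ) (n : ℕ) : p n (fun _ => t) = (a n - b n) * t ^ n := by
    simp [p, mul_comm]
  have hsum : ∀ᶠ t in 𝓝[>] 0, HasSum (fun n => (a n - b n) * t ^ n) 0 := by
    filter_upwards [h] with t ht
    simpa [sub_mul] using ht.1.sub ht.2
  obtain ⟨t, ht, ht0⟩ := (hsum.and self_mem_nhdsWithin).exists
  have hrad : 0 < p.radius := by
    refine lt_of_lt_of_le (ENNReal.coe_pos.2 (Real.toNNReal_pos.2 ht0))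
      (p.le_radius_of_tendsto (l := 0) ?_)
    refine (tendsto_zero_iff_norm_tendsto_zero.1 ht.summable.tendsto_atTop_zero).congr fun n => ?_
    simp [p, abs_of_pos ht0, ht0.le]
  have hp := (p.hasFPowerSeriesOnBall hrad).hasFPowerSeriesAt
  by_contra hab
  have hne : p ≠ 0 := by
    rwa [Ne, FormalMultilinearSeries.ofScalars_series_eq_zero, sub_eq_zero]
  have hpunct : ∀ᶠ t in 𝓝[>] 0, p.sum t ≠ 0 :=
    (hp.locally_ne_zero hne).filter_mono (nhdsWithin_mono 0 fun t (ht : 0 < t) => ht.ne')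
  obtain ⟨s, hs_ne, hs_zero⟩ := (hpunct.and hsum).exists
  exact hs_ne (by simpa [FormalMultilinearSeries.sum, hp_apply] using hs_zero.tsum_eq)

theorem Complex.tendsto_euler_sinh_prod (x : ℂ) :
    Tendsto (fun n : ℕ => π * x * ∏ j ∈ range n, (1 + x ^ 2 / ((j : ℂ) + 1) ^ 2)) atTop
      (𝓝 (sinh (π * x))) := by
  have h := (tendsto_euler_sin_prod (x * I)).mul_const (-I)
  convert h using 2 with n
  · simp only [mul_pow, I_sq, mul_neg_one, neg_div, sub_neg_eq_add]
    linear_combination (π * x * ∏ j ∈ range n, (1 + x ^ 2 / ((j : ℂ) + 1) ^ 2)) * I_sq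
  · rw [← mul_assoc, sin_mul_I, mul_assoc, mul_neg, I_mul_I, neg_neg, mul_one]

theorem prod_one_add_sq_eq_one_add_pow_ten {K : Type*} [CommRing K] {ζ : K}
    (hζ : ζ ^ 4 - ζ ^ 3 + ζ ^ 2 - ζ + 1 = 0) (u : K) :
    ∏ j ∈ range 5, (1 + (ζ ^ j * u) ^ 2) = 1 + u ^ 10 := by
  simp only [prod_range_succ, prod_range_zero]
  grind

theorem tendsto_prod_one_add_pow_ten {ζ : ℂ} (hζ : ζ ^ 4 - ζ ^ 3 + ζ ^ 2 - ζ + 1 = 0) {z : ℂ}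
    (hz : z ≠ 0) :
    Tendsto (fun N : ℕ => ∏ k ∈ range N, (1 + z ^ 10 / ((k : ℂ) + 1) ^ 10)) atTop
      (𝓝 ((∏ j ∈ range 5, Complex.sinh (ζ ^ j * (π * z))) / (π * z) ^ 5)) := by
  have hζ10 : ζ ^ 10 = 1 := by linear_combination (ζ ^ 6 + ζ ^ 5 - ζ - 1) * hζ
  have hk (k : ℕ) : ∏ j ∈ range 5, (1 + (ζ ^ j * z) ^ 2 / ((k : ℂ) + 1) ^ 2) =
      1 + z ^ 10 / ((k : ℂ) + 1) ^ 10 := by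
    rw [← div_pow, ← prod_one_add_sq_eq_one_add_pow_ten hζ]
    exact prod_congr rfl fun j _ => by rw [← mul_div_assoc, div_pow]
  have hπz : (π * z : ℂ) ^ 5 ≠ 0 := pow_ne_zero _ (mul_ne_zero (by exact_mod_cast pi_ne_zero) hz)
  simp only [mul_left_comm _ (π : ℂ) z]
  refine ((tendsto_finsetProd _ fun j _ => Complex.tendsto_euler_sinh_prod (ζ ^ j * z)).div_const
    ((π * z) ^ 5)).congr fun N => ?_
  rw [prod_mul_distrib, Finset.prod_comm, prod_congr rfl fun k _ => hk k, div_eq_iff hπz]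
  simp only [prod_range_succ, prod_range_zero]
  linear_combination ((π * z) ^ 5 * ∏ k ∈ range N, (1 + z ^ 10 / ((k : ℂ) + 1) ^ 10)) * hζ10

-- `X k` stands for `exp (w ζ ^ k)`, where `ζ ^ 5 = -1` and `ζ ^ 4 = ζ ^ 3 - ζ ^ 2 + ζ - 1`.
theorem prod_sub_inv_eq_alternating_sum {K : Type*} [Field K] (X : ℕ → K) (hX : ∀ k, X k ≠ 0)
    (hX5 : ∀ k, X (k + 5) = (X k)⁻¹) (hX4 : X 4 = X 1 * X 3 / (X 0 * X 2)) :
    ∏ j ∈ range 5, (X j - (X j)⁻¹) =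
      ∑ k ∈ range 10, (-1) ^ k *
        (X k ^ 2 - (X (k + 2) / X (k + 3)) ^ 2 - (X (k + 4) / X (k + 1)) ^ 2) := by
  have hX10 (k : ℕ) : X (k + 10) = X k := by rw [hX5 (k + 5), hX5, inv_inv]
  simp only [prod_range_succ, sum_range_succ, prod_range_zero, sum_range_zero, Nat.reduceAdd,
    zero_add]
  rw [show X 5 = (X 0)⁻¹ from hX5 0, show X 6 = (X 1)⁻¹ from hX5 1, show X 7 = (X 2)⁻¹ from hX5 2,
    show X 8 = (X 3)⁻¹ from hX5 3, show X 9 = (X 4)⁻¹ from hX5 4, show X 10 = X 0 from hX10 0,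
    show X 11 = X 1 from hX10 1, show X 12 = X 2 from hX10 2, show X 13 = X 3 from hX10 3, hX4]
  have := hX 0; have := hX 1; have := hX 2; have := hX 3
  field_simp
  ring

theorem prod_sinh_eq_alternating_sum {ζ : ℂ} (hζ : ζ ^ 4 - ζ ^ 3 + ζ ^ 2 - ζ + 1 = 0) (w : ℂ) :
    ∏ j ∈ range 5, Complex.sinh (ζ ^ j * w) =
      (∑ k ∈ range 10, (-1) ^ k * cexp (ζ ^ k * (2 * w))
        - ∑ k ∈ range 10, (-1) ^ k * cexp (ζ ^ k * ((ζ ^ 2 - ζ ^ 3) * (2 * w)))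
        - ∑ k ∈ range 10, (-1) ^ k * cexp (ζ ^ k * ((ζ ^ 4 - ζ) * (2 * w)))) / 32 := by
  have hζ5 : ζ ^ 5 = -1 := by linear_combination (ζ + 1) * hζ
  set X : ℕ → ℂ := fun k => cexp (ζ ^ k * w)
  have hX5 (k : ℕ) : X (k + 5) = (X k)⁻¹ := by
    simp only [X, ← Complex.exp_neg, pow_add, hζ5]; congr 1; ring
  have hX4 : X 4 = X 1 * X 3 / (X 0 * X 2) := by
    simp only [X, ← Complex.exp_add, ← Complex.exp_sub]; congr 1; linear_combination w * hζ
  have hsq (k : ℕ) : cexp (ζ ^ k * (2 * w)) = X k ^ 2 := by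
    simp only [X, ← Complex.exp_nat_mul]; congr 1; push_cast; ring
  have hsq_div (k a b : ℕ) :
      cexp (ζ ^ k * ((ζ ^ a - ζ ^ b) * (2 * w))) = (X (k + a) / X (k + b)) ^ 2 := by
    simp only [X, ← Complex.exp_sub, ← Complex.exp_nat_mul]; congr 1; push_cast; ring
  have h32 : (32 : ℂ) = ∏ j ∈ range 5, 2 := by norm_num
  rw [eq_div_iff (by norm_num), ← sum_sub_distrib, ← sum_sub_distrib, h32, ← prod_mul_distrib]
  simp only [← mul_sub]
  convert prod_sub_inv_eq_alternating_sum X (fun k => Complex.exp_ne_zero _) hX5 hX4 using 1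
  · simp only [mul_comm _ (2 : ℂ), Complex.two_sinh, Complex.exp_neg, X]
  · refine sum_congr rfl fun k _ => ?_
    rw [hsq, hsq_div, ← hsq_div k 4 1, pow_one]

theorem IsPrimitiveRoot.sum_pow_mul_eq {K : Type*} [Field K] {μ : K} {d : ℕ}
    (hμ : IsPrimitiveRoot μ d) (j : ℕ) :
    ∑ k ∈ range d, μ ^ (k * j) = if d ∣ j then (d : K) else 0 := by
  split_ifs with h
  · obtain ⟨m, rfl⟩ := h
    simp [mul_comm _ (d * m), pow_mul, hμ.pow_eq_one]
  · have h1 : μ ^ j ≠ 1 := fun h1 => h (hμ.pow_eq_one_iff_dvd j |>.1 h1)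
    simp only [mul_comm _ j, pow_mul]
    rw [geom_sum_eq h1, ← pow_mul, mul_comm, pow_mul, hμ.pow_eq_one, one_pow, sub_self, zero_div]

theorem hasSum_pow_mul_add_div_factorial {μ : ℂ} {d r : ℕ} (hμ : IsPrimitiveRoot μ d)
    (hr : r < d) (u : ℂ) :
    HasSum (fun n => u ^ (d * n + r) / (d * n + r).factorial)
      ((d : ℂ)⁻¹ * ∑ k ∈ range d, μ ^ (k * (d - r)) * cexp (μ ^ k * u)) := by
  have hd : (d : ℂ) ≠ 0 := by exact_mod_cast (show d ≠ 0 by omega)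
  have H := (hasSum_sum fun k (_ : k ∈ range d) =>
    (NormedSpace.expSeries_div_hasSum_exp (μ ^ k * u)).mul_left (μ ^ (k * (d - r)))).mul_left
      (d : ℂ)⁻¹
  have hterm (m : ℕ) :
      (d : ℂ)⁻¹ * ∑ k ∈ range d, μ ^ (k * (d - r)) * ((μ ^ k * u) ^ m / m.factorial) =
        if d ∣ m + (d - r) then u ^ m / m.factorial else 0 := by
    simp_rw [mul_pow, ← pow_mul, mul_div_assoc, ← mul_assoc, ← pow_add, ← mul_add, ← sum_mul,
      add_comm (d - r) m, hμ.sum_pow_mul_eq]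
    split_ifs
    · exact inv_mul_cancel_left₀ hd _
    · rw [zero_mul, mul_zero]
  rw [← Complex.exp_eq_exp_ℂ] at H
  simp only [hterm] at H
  have hinj : Function.Injective fun n => d * n + r := fun a b h =>
    Nat.eq_of_mul_eq_mul_left (n := d) (by omega) (by simpa using h)
  refine ((hinj.hasSum_iff fun m hm => ?_).2 H).congr_fun fun n => ?_
  · rw [if_neg]
    rintro ⟨_ | q, hq⟩
    · omega
    · exact hm ⟨q, by rw [mul_add, mul_one] at hq; dsimp only; omega⟩
  · rw [Function.comp_apply, if_pos ⟨n + 1, by rw [mul_add, mul_one]; omega⟩]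

theorem IsPrimitiveRoot.cyclotomic_ten_eq_zero {K : Type*} [CommRing K] [IsDomain K] {ζ : K}
    (hζ : IsPrimitiveRoot ζ 10) : ζ ^ 4 - ζ ^ 3 + ζ ^ 2 - ζ + 1 = 0 := by
  have h1 : ζ + 1 ≠ 0 := fun h0 =>
    hζ.pow_ne_one_of_pos_of_lt (l := 2) (by norm_num) (by norm_num)
      (by linear_combination (ζ - 1) * h0)
  have h5 : ζ ^ 5 - 1 ≠ 0 := sub_ne_zero.2 (hζ.pow_ne_one_of_pos_of_lt (by norm_num) (by norm_num))
  have h : (ζ ^ 5 - 1) * (ζ + 1) * (ζ ^ 4 - ζ ^ 3 + ζ ^ 2 - ζ + 1) = 0 := by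
    linear_combination hζ.pow_eq_one
  simpa [h1, h5] using h

theorem hasSum_coeff_mul_pow_ten {ζ : ℂ} (hζ : IsPrimitiveRoot ζ 10) {z : ℂ} (hz : z ≠ 0) :
    HasSum (fun n => 10 * (2 * π) ^ (10 * n) / (10 * n + 5).factorial *
        (1 - (ζ ^ 2 - ζ ^ 3) ^ (10 * n + 5) - (ζ ^ 4 - ζ) ^ (10 * n + 5)) * z ^ (10 * n))
      ((∏ j ∈ range 5, Complex.sinh (ζ ^ j * (π * z))) / (π * z) ^ 5) := by
  have hΦ := hζ.cyclotomic_ten_eq_zero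
  have hζ5 : ζ ^ 5 = -1 := by linear_combination (ζ + 1) * hΦ
  have hπz : (π * z : ℂ) ≠ 0 := mul_ne_zero (by exact_mod_cast pi_ne_zero) hz
  have hS (v : ℂ) := hasSum_pow_mul_add_div_factorial hζ (r := 5) (by norm_num) v
  have H := (((hS (2 * (π * z))).sub (hS ((ζ ^ 2 - ζ ^ 3) * (2 * (π * z))))).sub
    (hS ((ζ ^ 4 - ζ) * (2 * (π * z))))).mul_left (10 / (2 * (π * z)) ^ 5)
  have hval (A B C : ℂ) : (A - B - C) / 32 / (π * z) ^ 5 =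
      10 / (2 * (π * z)) ^ 5 * (10⁻¹ * A - 10⁻¹ * B - 10⁻¹ * C) := by
    field_simp
    ring
  have hcoeff (a b : ℂ) (n : ℕ) :
      10 * (2 * π) ^ (10 * n) / (10 * n + 5).factorial * (1 - a ^ (10 * n + 5) - b ^ (10 * n + 5))
        * z ^ (10 * n) = 10 / (2 * (π * z)) ^ 5 *
          ((2 * (π * z)) ^ (10 * n + 5) / (10 * n + 5).factorial
            - (a * (2 * (π * z))) ^ (10 * n + 5) / (10 * n + 5).factorial
            - (b * (2 * (π * z))) ^ (10 * n + 5) / (10 * n + 5).factorial) := by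
    field_simp
    ring
  simp only [Nat.reduceSub, pow_mul', hζ5] at H
  rw [prod_sinh_eq_alternating_sum hΦ, hval]
  exact H.congr_fun fun n => hcoeff _ _ n

local notation "ζ₁₀" => cexp (2 * π * Complex.I / 10)

theorem isPrimitiveRoot_ζ₁₀ : IsPrimitiveRoot ζ₁₀ 10 := by
  simpa using Complex.isPrimitiveRoot_exp 10 (by norm_num)

theorem ζ₁₀_pow_five : ζ₁₀ ^ 5 = -1 := by
  linear_combination (ζ₁₀ + 1) * isPrimitiveRoot_ζ₁₀.cyclotomic_ten_eq_zero

theorem two_cos_eq_pow_add_inv (k : ℕ) :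
    2 * Complex.cos (2 * π * k / 10) = ζ₁₀ ^ k + (ζ₁₀ ^ k)⁻¹ := by
  rw [Complex.two_cos, ← Complex.exp_nat_mul, ← Complex.exp_neg]
  congr 2 <;> ring

theorem two_cos_two_pi_div_five : 2 * Complex.cos (2 * π / 5) = ζ₁₀ ^ 2 - ζ₁₀ ^ 3 := by
  rw [show (2 * π / 5 : ℂ) = 2 * π * (2 : ℕ) / 10 by push_cast; ring, two_cos_eq_pow_add_inv,
    inv_eq_of_mul_eq_one_right (b := -ζ₁₀ ^ 3) (by linear_combination -ζ₁₀_pow_five),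
    sub_eq_add_neg]

theorem two_cos_four_pi_div_five : 2 * Complex.cos (4 * π / 5) = ζ₁₀ ^ 4 - ζ₁₀ := by
  rw [show (4 * π / 5 : ℂ) = 2 * π * (4 : ℕ) / 10 by push_cast; ring, two_cos_eq_pow_add_inv,
    inv_eq_of_mul_eq_one_right (b := -ζ₁₀) (by linear_combination -ζ₁₀_pow_five), sub_eq_add_neg]

noncomputable def zetaTenCoeff (n : ℕ) : ℝ :=
  10 * (2 * π) ^ (10 * n) / (Nat.factorial (10 * n + 5)) *
    (1 - (2 * Real.cos (2 * π / 5)) ^ (10 * n + 5) - (2 * Real.cos (4 * π / 5)) ^ (10 * n + 5))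

theorem HasProd.hasSum_zetaTenCoeff_mul_pow {t F : ℝ} (ht : 0 < t)
    (hF : HasProd (fun k : ℕ+ => 1 + t * (k : ℝ) ^ (-(10 : ℝ))) F) :
    HasSum (fun n => zetaTenCoeff n * t ^ n) F := by
  set z : ℝ := t ^ (10⁻¹ : ℝ)
  have hz10 : z ^ 10 = t := Real.rpow_inv_natCast_pow ht.le (by norm_num)
  have hz : (z : ℂ) ≠ 0 := by exact_mod_cast (Real.rpow_pos_of_pos ht _).ne'
  have hlim : Tendsto (fun N => ∏ k ∈ range N, (1 + (z : ℂ) ^ 10 / ((k : ℂ) + 1) ^ 10)) atTop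
      (𝓝 (F : ℂ)) := by
    refine ((Complex.continuous_ofReal.tendsto F).comp
      (hasProd_pnat_iff_hasProd_succ (f := fun k : ℕ => 1 + t * (k : ℝ) ^ (-(10 : ℝ))) |>.1
        hF).tendsto_prod_nat).congr fun N => ?_
    simp only [Function.comp_apply, Complex.ofReal_prod]
    refine prod_congr rfl fun k _ => ?_
    rw [Real.rpow_neg (by positivity), Real.rpow_ofNat, ← hz10]
    push_cast
    ring
  rw [← Complex.hasSum_ofReal, tendsto_nhds_unique hlim
    (tendsto_prod_one_add_pow_ten isPrimitiveRoot_ζ₁₀.cyclotomic_ten_eq_zero hz)]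
  refine (hasSum_coeff_mul_pow_ten isPrimitiveRoot_ζ₁₀ hz).congr_fun fun n => ?_
  rw [zetaTenCoeff, ← hz10]
  push_cast
  rw [two_cos_two_pi_div_five, two_cos_four_pi_div_five, ← pow_mul]

theorem zeta_ten_rep_general (n : ℕ) :
    mzv (fun _ : Fin n => (10 : ℝ)) =
      10 * (2 * π) ^ (10 * n) / (Nat.factorial (10 * n + 5)) *
        (1 - (2 * Real.cos (2 * π / 5)) ^ (10 * n + 5)
           - (2 * Real.cos (4 * π / 5)) ^ (10 * n + 5)) := by
  have hx0 (k : ℕ+) : 0 ≤ (k : ℝ) ^ (-(10 : ℝ)) := by positivity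
  have hx : Summable fun k : ℕ+ => (k : ℝ) ^ (-(10 : ℝ)) :=
    summable_pnat_iff_summable_nat.2 (Real.summable_nat_rpow.2 (by norm_num))
  have key : esymmTsum (fun k : ℕ+ => (k : ℝ) ^ (-(10 : ℝ))) = zetaTenCoeff := by
    refine eq_of_hasSum_mul_pow_eq (f := fun t => ∏' k : ℕ+, (1 + t * (k : ℝ) ^ (-(10 : ℝ)))) ?_
    filter_upwards [self_mem_nhdsWithin] with t (ht : 0 < t)
    have hF := (multipliable_one_add_of_summable_prod (summable_prod_finset_of_nonneg
      (fun k => mul_nonneg ht.le (hx0 k)) (hx.mul_left t))).hasProd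
    exact ⟨hF.hasSum_esymmTsum_mul_pow hx0 hx ht.le, hF.hasSum_zetaTenCoeff_mul_pow ht⟩
  rw [mzv_const_eq_esymmTsum, key, zetaTenCoeff]

/-- `ζ({10}^n) = (10 (2π)^{10n}/(10n+5)!) (1 - (2cos(2π/5))^{10n+5} - (2cos(4π/5))^{10n+5})`. -/
theorem zeta_ten_rep (n : ℕ) (hn : 1 ≤ n) :
    mzv (fun _ : Fin n => (10 : ℝ)) =
      10 * (2 * π) ^ (10 * n) / (Nat.factorial (10 * n + 5)) *
        (1 - (2 * Real.cos (2 * π / 5)) ^ (10 * n + 5)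
           - (2 * Real.cos (4 * π / 5)) ^ (10 * n + 5)) :=
  zeta_ten_rep_general n
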